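/- arXiv:2308.02732 — 4 statements merged into one kernel-verified Lean document; each statement's English description precedes it below -/
import Mathlib

section
/- In the color basis the coproduct is diagonal: for all 0 ≤ i ≤ n−1, Δ̂(c_i) = n · λ^{−2mi} · (c_i ⊗ c_i) in A ⊗ A. -/
/-! Expanding `c_i` in monomials, `Δ̂(c_i) = n⁻¹ ∑_k λ^{ki} ∑_{a+b ≡ k+2m} x^a ⊗ x^b`.
Each pair `(a, b)` occurs for exactly one `k`, namely `k ≡ a + b - 2m`, and since `λⁿ = 1` its
coefficient is `λ^{-2mi} λ^{ai} λ^{bi}`. This is the coefficient of `x^a ⊗ x^b` in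
`n λ^{-2mi} (c_i ⊗ c_i)`. -/

open Polynomial

/-- `A n = ℂ[x]/(x^n - 1)`. -/
abbrev ColorAlgebra (n : ℕ) : Type := AdjoinRoot (X ^ n - 1 : Polynomial ℂ)

/-- `λ = exp(2πi/n)`. -/
noncomputable def colorLambda (n : ℕ) : ℂ :=
  Complex.exp (2 * Real.pi * Complex.I / n)

/-- The color basis element `c_i = (1/n) ∑_{k=0}^{n-1} λ^{k i} x^k`. -/
noncomputable def colorBasisElem (n : ℕ) (i : Fin n) : ColorAlgebra n :=
  (n : ℂ)⁻¹ • ∑ k ∈ Finset.range n,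
    (colorLambda n) ^ (k * (i : ℕ)) • (AdjoinRoot.root (X ^ n - 1 : Polynomial ℂ)) ^ k


/-- `m = n/2` if `n` is even and `m = (n-1)/2` if `n` is odd. -/
def halfShift (n : ℕ) : ℕ := if Even n then n / 2 else (n - 1) / 2

open TensorProduct

theorem pow_mul_mul_pow_mul_of_add_mod_eq {M : Type*} [Monoid M] {ζ : M} {n : ℕ}
    (hζ : ζ ^ n = 1) {a b k s : ℕ} (h : (a + b) % n = (k + s) % n) (i : ℕ) :
    ζ ^ (k * i) * ζ ^ (s * i) = ζ ^ (a * i) * ζ ^ (b * i) := by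
  rw [← pow_add, ← pow_add, ← add_mul, ← add_mul, pow_eq_pow_mod _ hζ,
    pow_eq_pow_mod ((a + b) * i) hζ, Nat.mul_mod, ← h, ← Nat.mul_mod]

theorem Fin.add_val_mod_eq_iff_eq_sub {n : ℕ} [NeZero n] (a b k : Fin n) (s : ℕ) :
    ((a : ℕ) + b) % n = ((k : ℕ) + s) % n ↔ k = a + b - Fin.ofNat n s := by
  rw [eq_sub_iff_add_eq, Fin.ext_iff, Fin.val_add, Fin.val_add, Fin.val_ofNat, Nat.add_mod_mod,
    eq_comm]

theorem sum_pow_smul_sum_filter_add_mod_eq {K M : Type*} [Field K] [AddCommMonoid M]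
    [Module K M] {n : ℕ} [NeZero n] {ζ : K} (hζ : ζ ^ n = 1) (s i : ℕ)
    (F : Fin n × Fin n → M) :
    ∑ k : Fin n, ζ ^ ((k : ℕ) * i) •
        ∑ p ∈ Finset.univ.filter
            (fun p : Fin n × Fin n => ((p.1 : ℕ) + p.2) % n = ((k : ℕ) + s) % n), F p =
      (ζ ^ (s * i))⁻¹ •
        ∑ p : Fin n × Fin n, (ζ ^ ((p.1 : ℕ) * i) * ζ ^ ((p.2 : ℕ) * i)) • F p := by
  have hζ0 : ζ ^ (s * i) ≠ 0 := pow_ne_zero _ <| by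
    rintro rfl
    simp [NeZero.ne n] at hζ
  simp only [Finset.smul_sum, Finset.sum_filter, Fin.add_val_mod_eq_iff_eq_sub, smul_ite,
    smul_zero]
  rw [Finset.sum_comm]
  refine Finset.sum_congr rfl fun p _ => ?_
  rw [Finset.sum_ite_eq' Finset.univ, if_pos (Finset.mem_univ _), smul_smul]
  congr 1
  have hk := (Fin.add_val_mod_eq_iff_eq_sub p.1 p.2 (p.1 + p.2 - Fin.ofNat n s) s).mpr rfl
  rw [← pow_mul_mul_pow_mul_of_add_mod_eq hζ hk i, mul_comm _ (ζ ^ (s * i)),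
    inv_mul_cancel_left₀ hζ0]

theorem sum_smul_tmul_sum_smul {R M N ι κ : Type*} [CommSemiring R] [AddCommMonoid M]
    [AddCommMonoid N] [Module R M] [Module R N] (s : Finset ι) (t : Finset κ) (f : ι → R)
    (g : κ → R) (u : ι → M) (v : κ → N) :
    (∑ a ∈ s, f a • u a) ⊗ₜ[R] (∑ b ∈ t, g b • v b) =
      ∑ p ∈ s ×ˢ t, (f p.1 * g p.2) • (u p.1 ⊗ₜ[R] v p.2) := by
  rw [Finset.sum_product, sum_tmul]
  simp only [tmul_sum, smul_tmul_smul]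

theorem colorLambda_pow_self (n : ℕ) [NeZero n] : colorLambda n ^ n = 1 :=
  (Complex.isPrimitiveRoot_exp n (NeZero.ne n)).pow_eq_one

theorem colorBasisElem_eq_sum_univ (n : ℕ) (i : Fin n) :
    colorBasisElem n i = (n : ℂ)⁻¹ • ∑ k : Fin n,
      colorLambda n ^ ((k : ℕ) * i) • AdjoinRoot.root (X ^ n - 1 : ℂ[X]) ^ (k : ℕ) := by
  rw [colorBasisElem, Fin.sum_univ_eq_sum_range (fun k => colorLambda n ^ (k * (i : ℕ)) •
    AdjoinRoot.root (X ^ n - 1 : ℂ[X]) ^ k)]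

theorem coproduct_diagonal_on_colorBasis_general (n : ℕ)
    (Δ : ColorAlgebra n →ₗ[ℂ] TensorProduct ℂ (ColorAlgebra n) (ColorAlgebra n))
    (hΔ : ∀ k : Fin n,
      Δ ((AdjoinRoot.root (X ^ n - 1 : Polynomial ℂ)) ^ (k : ℕ)) =
        ∑ p ∈ Finset.univ.filter
            (fun p : Fin n × Fin n =>
              ((p.1 : ℕ) + (p.2 : ℕ)) % n = ((k : ℕ) + 2 * halfShift n) % n),
          ((AdjoinRoot.root (X ^ n - 1 : Polynomial ℂ)) ^ (p.1 : ℕ)) ⊗ₜ[ℂ]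
            ((AdjoinRoot.root (X ^ n - 1 : Polynomial ℂ)) ^ (p.2 : ℕ))) :
    ∀ i : Fin n,
      Δ (colorBasisElem n i) =
        (n : ℂ) • (colorLambda n ^ (-((2 * halfShift n * (i : ℕ) : ℕ) : ℤ))) •
          (colorBasisElem n i ⊗ₜ[ℂ] colorBasisElem n i) := by
  intro i
  have : NeZero n := ⟨i.pos.ne'⟩
  rw [colorBasisElem_eq_sum_univ, map_smul, map_sum]
  simp only [map_smul, hΔ]
  rw [sum_pow_smul_sum_filter_add_mod_eq (colorLambda_pow_self n), smul_tmul_smul,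
    sum_smul_tmul_sum_smul, Finset.univ_product_univ, zpow_neg, zpow_natCast, smul_smul, smul_smul, smul_smul]
  congr 1
  field_simp

/-- In the color basis the coproduct is diagonal:
`Δ̂(c_i) = n · λ^{-2mi} · (c_i ⊗ c_i)`. -/
theorem coproduct_diagonal_on_colorBasis (n : ℕ) (hn : 1 < n)
    (Δ : ColorAlgebra n →ₗ[ℂ] TensorProduct ℂ (ColorAlgebra n) (ColorAlgebra n))
    (hΔ : ∀ k : Fin n,
      Δ ((AdjoinRoot.root (X ^ n - 1 : Polynomial ℂ)) ^ (k : ℕ)) =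
        ∑ p ∈ Finset.univ.filter
            (fun p : Fin n × Fin n =>
              ((p.1 : ℕ) + (p.2 : ℕ)) % n = ((k : ℕ) + 2 * halfShift n) % n),
          ((AdjoinRoot.root (X ^ n - 1 : Polynomial ℂ)) ^ (p.1 : ℕ)) ⊗ₜ[ℂ]
            ((AdjoinRoot.root (X ^ n - 1 : Polynomial ℂ)) ^ (p.2 : ℕ))) :
    ∀ i : Fin n,
      Δ (colorBasisElem n i) =
        (n : ℂ) • (colorLambda n ^ (-((2 * halfShift n * (i : ℕ) : ℕ) : ℤ))) •
          (colorBasisElem n i ⊗ₜ[ℂ] colorBasisElem n i) :=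
  coproduct_diagonal_on_colorBasis_general n Δ hΔ
end

section
/- The Frobenius relation holds for (A, m̂, Δ̂): as linear maps A ⊗ A → A ⊗ A one has Δ̂ ∘ m̂ = (id_A ⊗ m̂) ∘ (Δ̂ ⊗ id_A) = (m̂ ⊗ id_A) ∘ (id_A ⊗ Δ̂). -/
/-! Multiplying `∑_{i + j ≡ c} xⁱ ⊗ xʲ` by `xᵏ` in either tensor factor shifts `c` by `k`, so
`Δ̂ a = (a ⊗ 1) Δ̂ 1 = Δ̂ 1 (1 ⊗ a)`: `Δ̂` is a map of `A`-bimodules. For any algebra, left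
(right) `A`-linearity of a comultiplication is exactly the corresponding half of the Frobenius
relation. -/

open Polynomial

open TensorProduct

section Frobenius

variable {R A : Type*} [CommSemiring R] [Semiring A] [Algebra R A]

theorem TensorProduct.map_id_mul'_assoc_tmul (t : A ⊗[R] A) (b : A) :
    map LinearMap.id (LinearMap.mul' R A) (TensorProduct.assoc R A A A (t ⊗ₜ b)) =
      t * (1 ⊗ₜ b) := by
  induction t using TensorProduct.induction_on with
  | zero => simp
  | tmul x y => simp
  | add s t hs ht => simp only [add_tmul, map_add, hs, ht, add_mul]

theorem TensorProduct.map_mul'_id_assoc_symm_tmul (a : A) (t : A ⊗[R] A) :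
    map (LinearMap.mul' R A) LinearMap.id ((TensorProduct.assoc R A A A).symm (a ⊗ₜ t)) =
      (a ⊗ₜ 1) * t := by
  induction t using TensorProduct.induction_on with
  | zero => simp
  | tmul x y => simp
  | add s t hs ht => simp only [tmul_add, map_add, hs, ht, mul_add]

variable (Δ : A →ₗ[R] A ⊗[R] A)

theorem comp_mul'_eq_of_map_eq_map_one_mul (h : ∀ a, Δ a = Δ 1 * (1 ⊗ₜ a)) :
    Δ ∘ₗ LinearMap.mul' R A = map LinearMap.id (LinearMap.mul' R A) ∘ₗ
      (TensorProduct.assoc R A A A).toLinearMap ∘ₗ map Δ LinearMap.id := by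
  ext a b
  simp [TensorProduct.map_id_mul'_assoc_tmul, h a, h (a * b), mul_assoc]

theorem comp_mul'_eq_of_map_eq_tmul_mul_map_one (h : ∀ a, Δ a = (a ⊗ₜ 1) * Δ 1) :
    Δ ∘ₗ LinearMap.mul' R A = map (LinearMap.mul' R A) LinearMap.id ∘ₗ
      (TensorProduct.assoc R A A A).symm.toLinearMap ∘ₗ map LinearMap.id Δ := by
  ext a b
  simp [TensorProduct.map_mul'_id_assoc_symm_tmul, h b, h (a * b), ← mul_assoc]

end Frobenius

def cyclicAntidiagonal (n c : ℕ) : Finset (Fin n × Fin n) :=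
  {p | ((p.1 : ℕ) + p.2) % n = c % n}

section CyclicAntidiagonal

variable {M : Type*} [AddCommMonoid M] {n : ℕ} [NeZero n]

theorem sum_cyclicAntidiagonal_add_left (f : ℕ → ℕ → M) (hf : ∀ i j, f (i % n) j = f i j)
    (c : ℕ) (k : Fin n) :
    ∑ p ∈ cyclicAntidiagonal n (k + c), f p.1 p.2 =
      ∑ p ∈ cyclicAntidiagonal n c, f (k + p.1) p.2 := by
  refine (Finset.sum_equiv (.prodCongr (.addLeft k) (.refl _)) (fun p => ?_) fun p _ => ?_).symm
  · simp only [cyclicAntidiagonal, Finset.mem_filter, Finset.mem_univ, true_and,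
      Equiv.prodCongr_apply, Equiv.coe_addLeft, Equiv.coe_refl, Prod.map_fst, Prod.map_snd, id_eq,
      ← ZMod.natCast_eq_natCast_iff']
    push_cast [Fin.val_add, ZMod.natCast_mod]
    constructor <;> intro h <;> linear_combination h
  · simp [Fin.val_add, hf]

theorem sum_cyclicAntidiagonal_add_right (f : ℕ → ℕ → M) (hf : ∀ i j, f i (j % n) = f i j)
    (c : ℕ) (k : Fin n) :
    ∑ p ∈ cyclicAntidiagonal n (k + c), f p.1 p.2 =
      ∑ p ∈ cyclicAntidiagonal n c, f p.1 (k + p.2) := by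
  refine (Finset.sum_equiv (.prodCongr (.refl _) (.addLeft k)) (fun p => ?_) fun p _ => ?_).symm
  · simp only [cyclicAntidiagonal, Finset.mem_filter, Finset.mem_univ, true_and,
      Equiv.prodCongr_apply, Equiv.coe_addLeft, Equiv.coe_refl, Prod.map_fst, Prod.map_snd, id_eq,
      ← ZMod.natCast_eq_natCast_iff']
    push_cast [Fin.val_add, ZMod.natCast_mod]
    constructor <;> intro h <;> linear_combination h
  · simp [Fin.val_add, hf]

variable {R A : Type*} [CommSemiring R] [CommSemiring A] [Algebra R A] {x : A}

theorem tmul_one_mul_sum_cyclicAntidiagonal (hx : x ^ n = 1) (c : ℕ) (k : Fin n) :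
    ((x ^ (k : ℕ)) ⊗ₜ[R] 1) *
        ∑ p ∈ cyclicAntidiagonal n c, (x ^ (p.1 : ℕ)) ⊗ₜ (x ^ (p.2 : ℕ)) =
      ∑ p ∈ cyclicAntidiagonal n (k + c), (x ^ (p.1 : ℕ)) ⊗ₜ (x ^ (p.2 : ℕ)) := by
  rw [sum_cyclicAntidiagonal_add_left (fun i j => (x ^ i) ⊗ₜ[R] (x ^ j))
    (fun i j => by rw [← pow_eq_pow_mod i hx]), Finset.mul_sum]
  simp [Algebra.TensorProduct.tmul_mul_tmul, pow_add]

theorem sum_cyclicAntidiagonal_mul_one_tmul (hx : x ^ n = 1) (c : ℕ) (k : Fin n) :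
    (∑ p ∈ cyclicAntidiagonal n c, (x ^ (p.1 : ℕ)) ⊗ₜ[R] (x ^ (p.2 : ℕ))) *
        (1 ⊗ₜ (x ^ (k : ℕ))) =
      ∑ p ∈ cyclicAntidiagonal n (k + c), (x ^ (p.1 : ℕ)) ⊗ₜ (x ^ (p.2 : ℕ)) := by
  rw [sum_cyclicAntidiagonal_add_right (fun i j => (x ^ i) ⊗ₜ[R] (x ^ j))
    (fun i j => by rw [← pow_eq_pow_mod j hx]), Finset.sum_mul]
  simp [Algebra.TensorProduct.tmul_mul_tmul, pow_add, mul_comm]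

end CyclicAntidiagonal

theorem Polynomial.monic_X_pow_sub_one {R : Type*} [Ring R] {n : ℕ} (hn : n ≠ 0) :
    (X ^ n - 1 : R[X]).Monic := by
  simpa using monic_X_pow_sub_C (1 : R) hn

theorem Polynomial.natDegree_X_pow_sub_one {R : Type*} [Ring R] [Nontrivial R] (n : ℕ) :
    (X ^ n - 1 : R[X]).natDegree = n := by
  simpa using natDegree_X_pow_sub_C (n := n) (r := (1 : R))

namespace AdjoinRoot

theorem linearMap_ext_of_monic {R M : Type*} [CommRing R] [AddCommMonoid M] [Module R M]
    {g : R[X]} (hg : g.Monic) {φ ψ : AdjoinRoot g →ₗ[R] M}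
    (h : ∀ k < g.natDegree, φ (root g ^ k) = ψ (root g ^ k)) : φ = ψ :=
  (powerBasis' hg).basis.ext fun k => by
    simpa [PowerBasis.basis_eq_pow] using h k k.2

variable {R : Type*} [CommRing R] {n : ℕ}

theorem root_X_pow_sub_one_pow : root (X ^ n - 1 : R[X]) ^ n = 1 := by
  have h := mk_self (f := (X ^ n - 1 : R[X]))
  rwa [map_sub, map_pow, mk_X, map_one, sub_eq_zero] at h

variable [Nontrivial R] [NeZero n] {c : ℕ}
  (Δ : AdjoinRoot (X ^ n - 1 : R[X]) →ₗ[R]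
    AdjoinRoot (X ^ n - 1 : R[X]) ⊗[R] AdjoinRoot (X ^ n - 1 : R[X]))

theorem map_eq_tmul_one_mul_map_one
    (hΔ : ∀ k < n, Δ (root (X ^ n - 1) ^ k) = ∑ p ∈ cyclicAntidiagonal n (k + c),
      (root (X ^ n - 1) ^ (p.1 : ℕ)) ⊗ₜ (root (X ^ n - 1) ^ (p.2 : ℕ)))
    (a : AdjoinRoot (X ^ n - 1 : R[X])) : Δ a = (a ⊗ₜ 1) * Δ 1 := by
  have hΔ1 := hΔ 0 (NeZero.pos n)
  rw [pow_zero, zero_add] at hΔ1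
  refine LinearMap.congr_fun (linearMap_ext_of_monic (monic_X_pow_sub_one (NeZero.ne n))
    (ψ := LinearMap.mulRight R (Δ 1) ∘ₗ Algebra.TensorProduct.includeLeft.toLinearMap)
    fun k hk => ?_) a
  rw [natDegree_X_pow_sub_one] at hk
  simp [hΔ k hk, hΔ1, tmul_one_mul_sum_cyclicAntidiagonal root_X_pow_sub_one_pow c ⟨k, hk⟩]

theorem map_eq_map_one_mul_one_tmul
    (hΔ : ∀ k < n, Δ (root (X ^ n - 1) ^ k) = ∑ p ∈ cyclicAntidiagonal n (k + c),
      (root (X ^ n - 1) ^ (p.1 : ℕ)) ⊗ₜ (root (X ^ n - 1) ^ (p.2 : ℕ)))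
    (a : AdjoinRoot (X ^ n - 1 : R[X])) : Δ a = Δ 1 * (1 ⊗ₜ a) := by
  have hΔ1 := hΔ 0 (NeZero.pos n)
  rw [pow_zero, zero_add] at hΔ1
  refine LinearMap.congr_fun (linearMap_ext_of_monic (monic_X_pow_sub_one (NeZero.ne n))
    (ψ := LinearMap.mulLeft R (Δ 1) ∘ₗ Algebra.TensorProduct.includeRight.toLinearMap)
    fun k hk => ?_) a
  rw [natDegree_X_pow_sub_one] at hk
  simp [hΔ k hk, hΔ1, sum_cyclicAntidiagonal_mul_one_tmul root_X_pow_sub_one_pow c ⟨k, hk⟩]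

end AdjoinRoot

/-- The Frobenius relation for `(A, m̂, Δ̂)`:
`Δ̂ ∘ m̂ = (id ⊗ m̂) ∘ (Δ̂ ⊗ id) = (m̂ ⊗ id) ∘ (id ⊗ Δ̂)`. -/
theorem frobenius_relation (n : ℕ) (hn : 1 < n)
    (Δ : ColorAlgebra n →ₗ[ℂ] TensorProduct ℂ (ColorAlgebra n) (ColorAlgebra n))
    (hΔ : ∀ k : Fin n,
      Δ ((AdjoinRoot.root (X ^ n - 1 : Polynomial ℂ)) ^ (k : ℕ)) =
        ∑ p ∈ Finset.univ.filter
            (fun p : Fin n × Fin n =>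
              ((p.1 : ℕ) + (p.2 : ℕ)) % n = ((k : ℕ) + 2 * halfShift n) % n),
          ((AdjoinRoot.root (X ^ n - 1 : Polynomial ℂ)) ^ (p.1 : ℕ)) ⊗ₜ[ℂ]
            ((AdjoinRoot.root (X ^ n - 1 : Polynomial ℂ)) ^ (p.2 : ℕ))) :
    Δ.comp (LinearMap.mul' ℂ (ColorAlgebra n)) =
        (TensorProduct.map LinearMap.id (LinearMap.mul' ℂ (ColorAlgebra n))).comp
          ((TensorProduct.assoc ℂ (ColorAlgebra n) (ColorAlgebra n)
              (ColorAlgebra n)).toLinearMap.comp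
            (TensorProduct.map Δ LinearMap.id)) ∧
      Δ.comp (LinearMap.mul' ℂ (ColorAlgebra n)) =
        (TensorProduct.map (LinearMap.mul' ℂ (ColorAlgebra n)) LinearMap.id).comp
          (((TensorProduct.assoc ℂ (ColorAlgebra n) (ColorAlgebra n)
              (ColorAlgebra n)).symm.toLinearMap).comp
            (TensorProduct.map LinearMap.id Δ)) := by
  have : NeZero n := ⟨by omega⟩
  have hΔ' : ∀ k < n, Δ (AdjoinRoot.root (X ^ n - 1) ^ k) =
      ∑ p ∈ cyclicAntidiagonal n (k + 2 * halfShift n),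
        (AdjoinRoot.root (X ^ n - 1) ^ (p.1 : ℕ)) ⊗ₜ
          (AdjoinRoot.root (X ^ n - 1) ^ (p.2 : ℕ)) :=
    fun k hk => hΔ ⟨k, hk⟩
  exact ⟨comp_mul'_eq_of_map_eq_map_one_mul Δ (AdjoinRoot.map_eq_map_one_mul_one_tmul Δ hΔ'),
    comp_mul'_eq_of_map_eq_tmul_mul_map_one Δ (AdjoinRoot.map_eq_tmul_one_mul_map_one Δ hΔ')⟩
end

section
/- The coproduct Δ̂ is coassociative: as linear maps A → A ⊗ A ⊗ A one has (Δ̂ ⊗ id_A) ∘ Δ̂ = (id_A ⊗ Δ̂) ∘ Δ̂. -/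
/-!
Index the monomial basis by the cyclic group `G = ℤ/n`. Then `Δ̂ xᵏ = ∑ₐ xᵃ ⊗ x^(k + t - a)` with
`t = 2m`, so both iterated coproducts send `xᵏ` to the sum of `xᵃ ⊗ xᵇ ⊗ xᶜ` over all triples with
`a + b + c = k + 2t`; on each side this is seen by a translation of one summation variable.
-/

open Polynomial

open TensorProduct

theorem Fin.val_add_mod_eq_val_add_mod_iff {n : ℕ} [NeZero n] (a b c : Fin n) (m : ℕ) :
    ((a : ℕ) + b) % n = (c + m) % n ↔ a + b = c + Fin.ofNat n m := by
  simp [Fin.ext_iff, Fin.val_add]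

theorem Finset.sum_filter_add_eq {G M : Type*} [AddCommGroup G] [Fintype G] [DecidableEq G]
    [AddCommMonoid M] (s : G) (f : G → G → M) :
    ∑ p ∈ univ.filter (fun p : G × G => p.1 + p.2 = s), f p.1 p.2 = ∑ a, f a (s - a) := by
  rw [Finset.sum_filter, Fintype.sum_prod_type]
  refine Fintype.sum_congr _ _ fun a => ?_
  simp [← eq_sub_iff_add_eq']

theorem Module.Basis.coassoc_of_apply_eq_sum_tmul_sub {R M G : Type*} [CommSemiring R]
    [AddCommMonoid M] [Module R M] [AddCommGroup G] [Fintype G] (b : Basis G R M) (t : G)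
    (Δ : M →ₗ[R] M ⊗[R] M) (hΔ : ∀ k, Δ (b k) = ∑ a, b a ⊗ₜ b (k + t - a)) :
    (TensorProduct.assoc R M M M).toLinearMap ∘ₗ (map Δ LinearMap.id ∘ₗ Δ) =
      map LinearMap.id Δ ∘ₗ Δ := by
  refine b.ext fun k => ?_
  simp only [LinearMap.comp_apply, hΔ, map_sum, map_tmul, LinearMap.id_coe, id_eq, sum_tmul,
    tmul_sum, LinearEquiv.coe_coe, assoc_tmul]
  rw [Finset.sum_comm]
  refine Fintype.sum_congr _ _ fun a => Fintype.sum_equiv (Equiv.addRight (t - a)) _ _ fun c => ?_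
  simp only [Equiv.coe_addRight]
  congr 3 <;> abel

noncomputable def AdjoinRoot.powBasis {R : Type*} [CommRing R] {f : R[X]} (hf : f.Monic) {n : ℕ}
    (hdeg : f.natDegree = n) : Module.Basis (Fin n) R (AdjoinRoot f) :=
  (AdjoinRoot.powerBasis' hf).basis.reindex (finCongr hdeg)

theorem AdjoinRoot.powBasis_apply {R : Type*} [CommRing R] {f : R[X]} (hf : f.Monic) {n : ℕ}
    (hdeg : f.natDegree = n) (k : Fin n) : powBasis hf hdeg k = root f ^ (k : ℕ) := by
  rw [powBasis, Module.Basis.reindex_apply, PowerBasis.basis_eq_pow]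
  rfl

/-- The coproduct `Δ̂` is coassociative: `(Δ̂ ⊗ id) ∘ Δ̂ = (id ⊗ Δ̂) ∘ Δ̂`. -/
theorem coproduct_coassociative (n : ℕ) (hn : 1 < n)
    (Δ : ColorAlgebra n →ₗ[ℂ] TensorProduct ℂ (ColorAlgebra n) (ColorAlgebra n))
    (hΔ : ∀ k : Fin n,
      Δ ((AdjoinRoot.root (X ^ n - 1 : Polynomial ℂ)) ^ (k : ℕ)) =
        ∑ p ∈ Finset.univ.filter
            (fun p : Fin n × Fin n =>
              ((p.1 : ℕ) + (p.2 : ℕ)) % n = ((k : ℕ) + 2 * halfShift n) % n),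
          ((AdjoinRoot.root (X ^ n - 1 : Polynomial ℂ)) ^ (p.1 : ℕ)) ⊗ₜ[ℂ]
            ((AdjoinRoot.root (X ^ n - 1 : Polynomial ℂ)) ^ (p.2 : ℕ))) :
    ((TensorProduct.assoc ℂ (ColorAlgebra n) (ColorAlgebra n)
          (ColorAlgebra n)).toLinearMap.comp
        ((TensorProduct.map Δ LinearMap.id).comp Δ)) =
      (TensorProduct.map LinearMap.id Δ).comp Δ := by
  have : NeZero n := NeZero.of_gt hn
  have hmonic : (X ^ n - 1 : ℂ[X]).Monic := by simpa using monic_X_pow_sub_C (1 : ℂ) (NeZero.ne n)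
  have hdeg : (X ^ n - 1 : ℂ[X]).natDegree = n := by
    simpa using natDegree_X_pow_sub_C (r := (1 : ℂ))
  refine (AdjoinRoot.powBasis hmonic hdeg).coassoc_of_apply_eq_sum_tmul_sub
    (Fin.ofNat n (2 * halfShift n)) Δ fun k => ?_
  simp only [AdjoinRoot.powBasis_apply, hΔ, Fin.val_add_mod_eq_val_add_mod_iff]
  exact Finset.sum_filter_add_eq _ fun a c : Fin n =>
    (AdjoinRoot.root (X ^ n - 1 : ℂ[X]) ^ (a : ℕ)) ⊗ₜ[ℂ]
      (AdjoinRoot.root (X ^ n - 1 : ℂ[X]) ^ (c : ℕ))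
end

section
/- For every cubic graph G with perfect matching M, the number of perfect matching 3-colorings of (G, M) equals the number of proper 3-edge colorings of G, where a proper 3-edge coloring is a function from the edge set of G to a 3-element color set assigning distinct colors to any two distinct edges sharing a vertex. -/
/-- `M` is a perfect matching of `G`, viewed as a set of edges: `M ⊆ E(G)` and every
vertex is incident to exactly one edge of `M`. -/
def IsPerfectMatchingSet {V : Type*} (G : SimpleGraph V) (M : Set (Sym2 V)) : Prop :=
  M ⊆ G.edgeSet ∧ ∀ v : V, ∃! e : Sym2 V, e ∈ M ∧ v ∈ e

/-- The non-matching edges of `(G, M)`: the edges of `G` not belonging to `M`. -/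
def NonMatchingEdge {V : Type*} (G : SimpleGraph V) (M : Set (Sym2 V)) : Type _ :=
  {e : Sym2 V // e ∈ G.edgeSet ∧ e ∉ M}

/-- `f` is a perfect matching `n`-coloring of `(G, M)`: for every matching edge
`{u, v} ∈ M`, the edges of `E(G) ∖ M` incident to `u` receive distinct colors, and the
set of colors appearing on edges of `E(G) ∖ M` incident to `u` equals the set of colors
appearing on edges of `E(G) ∖ M` incident to `v`. -/
def IsPMColoring {V : Type*} (G : SimpleGraph V) (M : Set (Sym2 V)) {n : ℕ}
    (f : NonMatchingEdge G M → Fin n) : Prop :=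
  ∀ u v : V, s(u, v) ∈ M →
    (∀ e₁ e₂ : NonMatchingEdge G M, u ∈ e₁.1 → u ∈ e₂.1 → e₁ ≠ e₂ → f e₁ ≠ f e₂) ∧
    {c : Fin n | ∃ e : NonMatchingEdge G M, u ∈ e.1 ∧ f e = c} =
      {c : Fin n | ∃ e : NonMatchingEdge G M, v ∈ e.1 ∧ f e = c}

/-!
At every vertex of a cubic graph exactly two edges avoid the perfect matching. Hence the
colours seen at `u` by a perfect matching 3-colouring form the complement `{c}ᶜ` of a single
colour, and the second condition says that both ends of a matching edge miss the same colour `c`.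
Giving the matching edge that colour yields a proper 3-edge colouring. Conversely, the restriction
of a proper 3-edge colouring sees at both ends of a matching edge exactly the colours other than
that edge's, so it is a perfect matching 3-colouring, and the two constructions are inverse.
-/

theorem Fin.pair_eq_compl_singleton {a b c : Fin 3} (hab : a ≠ b) (hca : c ≠ a) (hcb : c ≠ b) :
    ({a, b} : Set (Fin 3)) = {c}ᶜ := by
  ext x
  simp only [Set.mem_insert_iff, Set.mem_singleton_iff, Set.mem_compl_iff]
  revert a b c x
  decide

theorem Fin.exists_pair_eq_compl_singleton {a b : Fin 3} (hab : a ≠ b) :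
    ∃ c, ({a, b} : Set (Fin 3)) = {c}ᶜ := by
  obtain ⟨c, hca, hcb⟩ : ∃ c, c ≠ a ∧ c ≠ b := by
    revert a b
    decide
  exact ⟨c, pair_eq_compl_singleton hab hca hcb⟩

section

variable {V α : Type*} {G : SimpleGraph V} {M : Set (Sym2 V)}

def IsProperEdgeColoring (G : SimpleGraph V) (g : G.edgeSet → α) : Prop :=
  ∀ e₁ e₂ : G.edgeSet, e₁ ≠ e₂ → (∃ v : V, v ∈ e₁.1 ∧ v ∈ e₂.1) → g e₁ ≠ g e₂

theorem NonMatchingEdge.ext_iff {e e' : NonMatchingEdge G M} : e = e' ↔ e.1 = e'.1 :=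
  Subtype.ext_iff

def NonMatchingEdge.toEdge (e : NonMatchingEdge G M) : G.edgeSet :=
  ⟨e.1, e.2.1⟩

theorem NonMatchingEdge.toEdge_injective :
    Function.Injective (NonMatchingEdge.toEdge : NonMatchingEdge G M → G.edgeSet) :=
  fun _ _ h => NonMatchingEdge.ext_iff.mpr (congrArg (fun e : G.edgeSet => e.1) h)

theorem NonMatchingEdge.toEdge_ne_of_mem {e : NonMatchingEdge G M} {m : G.edgeSet}
    (hm : m.1 ∈ M) : e.toEdge ≠ m :=
  fun h => e.2.2 (congrArg (fun e : G.edgeSet => e.1) h ▸ hm)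

namespace IsPerfectMatchingSet

theorem eq_of_mem (hM : IsPerfectMatchingSet G M) {e e' : Sym2 V} {u : V}
    (he : e ∈ M) (hu : u ∈ e) (he' : e' ∈ M) (hu' : u ∈ e') : e = e' :=
  (hM.2 u).unique ⟨he, hu⟩ ⟨he', hu'⟩

theorem exists_mk_mem (hM : IsPerfectMatchingSet G M) (u : V) : ∃ w, s(u, w) ∈ M := by
  obtain ⟨m, ⟨hmM, hum⟩, -⟩ := hM.2 u
  obtain ⟨w, rfl⟩ := Sym2.mem_iff_exists.mp hum
  exact ⟨w, hmM⟩

theorem exists_nonMatchingEdge_pair [G.LocallyFinite] (hcubic : ∀ v, G.degree v = 3)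
    (hM : IsPerfectMatchingSet G M) (u : V) :
    ∃ e₁ e₂ : NonMatchingEdge G M,
      e₁ ≠ e₂ ∧ ∀ e : NonMatchingEdge G M, u ∈ e.1 ↔ e = e₁ ∨ e = e₂ := by
  classical
  obtain ⟨m, ⟨hmM, hum⟩, hm_unique⟩ := hM.2 u
  have mem_erase {e : Sym2 V} :
      e ∈ (G.incidenceFinset u).erase m ↔ e ∈ G.edgeSet ∧ e ∉ M ∧ u ∈ e := by
    rw [Finset.mem_erase, SimpleGraph.mem_incidenceFinset]
    exact ⟨fun ⟨hne, he, hu⟩ => ⟨he, fun heM => hne (hm_unique e ⟨heM, hu⟩), hu⟩,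
      fun ⟨he, heM, hu⟩ => ⟨fun h => heM (h ▸ hmM), he, hu⟩⟩
  have hcard : ((G.incidenceFinset u).erase m).card = 2 := by
    rw [Finset.card_erase_of_mem ((G.mem_incidenceFinset _ _).mpr ⟨hM.1 hmM, hum⟩),
      G.card_incidenceFinset_eq_degree, hcubic]
  obtain ⟨x, y, hxy, hpair⟩ := Finset.card_eq_two.mp hcard
  have hx := mem_erase.mp (hpair ▸ Finset.mem_insert_self x {y})
  have hy := mem_erase.mp (hpair ▸ Finset.mem_insert_of_mem (Finset.mem_singleton_self y))
  refine ⟨⟨x, hx.1, hx.2.1⟩, ⟨y, hy.1, hy.2.1⟩, fun h => hxy (NonMatchingEdge.ext_iff.mp h), ?_⟩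
  intro e
  constructor
  · intro hu
    have := mem_erase.mpr ⟨e.2.1, e.2.2, hu⟩
    rw [hpair, Finset.mem_insert, Finset.mem_singleton] at this
    exact this.imp NonMatchingEdge.ext_iff.mpr NonMatchingEdge.ext_iff.mpr
  · rintro (rfl | rfl)
    exacts [hx.2.2, hy.2.2]

end IsPerfectMatchingSet

def colorsAt (f : NonMatchingEdge G M → α) (u : V) : Set α :=
  {c | ∃ e : NonMatchingEdge G M, u ∈ e.1 ∧ f e = c}

theorem colorsAt_eq_pair {f : NonMatchingEdge G M → α} {u : V} {e₁ e₂ : NonMatchingEdge G M}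
    (h : ∀ e : NonMatchingEdge G M, u ∈ e.1 ↔ e = e₁ ∨ e = e₂) :
    colorsAt f u = {f e₁, f e₂} := by
  ext c
  simp only [colorsAt, h]
  aesop

namespace IsPMColoring

theorem ne_of_mem {n : ℕ} {f : NonMatchingEdge G M → Fin n} (hf : IsPMColoring G M f)
    (hM : IsPerfectMatchingSet G M) {u : V} {e₁ e₂ : NonMatchingEdge G M} (hu₁ : u ∈ e₁.1)
    (hu₂ : u ∈ e₂.1) (hne : e₁ ≠ e₂) :
    f e₁ ≠ f e₂ := by
  obtain ⟨w, hw⟩ := hM.exists_mk_mem u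
  exact (hf u w hw).1 e₁ e₂ hu₁ hu₂ hne

theorem colorsAt_eq {n : ℕ} {f : NonMatchingEdge G M → Fin n} (hf : IsPMColoring G M f)
    {u v : V} (huv : s(u, v) ∈ M) : colorsAt f u = colorsAt f v :=
  (hf u v huv).2

theorem exists_colorsAt_eq_compl [G.LocallyFinite] {f : NonMatchingEdge G M → Fin 3}
    (hf : IsPMColoring G M f) (hcubic : ∀ v, G.degree v = 3) (hM : IsPerfectMatchingSet G M)
    (u : V) : ∃ c, colorsAt f u = {c}ᶜ := by
  obtain ⟨e₁, e₂, hne, hedges⟩ := hM.exists_nonMatchingEdge_pair hcubic u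
  rw [colorsAt_eq_pair hedges]
  exact Fin.exists_pair_eq_compl_singleton
    (hf.ne_of_mem hM ((hedges e₁).mpr (.inl rfl)) ((hedges e₂).mpr (.inr rfl)) hne)

end IsPMColoring

open Classical in
noncomputable def extendColoring [Nonempty α] (f : NonMatchingEdge G M → α) (e : G.edgeSet) : α :=
  if h : e.1 ∈ M then Classical.epsilon fun c => ∀ u ∈ e.1, colorsAt f u = {c}ᶜ
  else f ⟨e.1, e.2, h⟩

theorem extendColoring_of_not_mem [Nonempty α] {f : NonMatchingEdge G M → α} {e : G.edgeSet}
    (he : e.1 ∉ M) : extendColoring f e = f ⟨e.1, e.2, he⟩ :=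
  dif_neg he

def restrictColoring (M : Set (Sym2 V)) (g : G.edgeSet → α) (e : NonMatchingEdge G M) : α :=
  g e.toEdge

theorem restrictColoring_extendColoring [Nonempty α] (f : NonMatchingEdge G M → α) :
    restrictColoring M (extendColoring f) = f :=
  funext fun e => extendColoring_of_not_mem e.2.2

section Cubic

variable [G.LocallyFinite] (hcubic : ∀ v, G.degree v = 3) (hM : IsPerfectMatchingSet G M)
include hcubic hM

theorem IsPMColoring.colorsAt_eq_compl_extendColoring {f : NonMatchingEdge G M → Fin 3}
    (hf : IsPMColoring G M f) {e : G.edgeSet} (he : e.1 ∈ M) {u : V} (hu : u ∈ e.1) :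
    colorsAt f u = {extendColoring f e}ᶜ := by
  rw [extendColoring, dif_pos he]
  refine Classical.epsilon_spec (p := fun c => ∀ u ∈ e.1, colorsAt f u = {c}ᶜ) ?_ u hu
  obtain ⟨c, hc⟩ := hf.exists_colorsAt_eq_compl hcubic hM u
  refine ⟨c, fun w hw => ?_⟩
  by_cases huw : u = w
  · exact huw ▸ hc
  · rw [← hf.colorsAt_eq ((Sym2.mem_and_mem_iff huw).mp ⟨hu, hw⟩ ▸ he), hc]

theorem IsPMColoring.isProperEdgeColoring_extendColoring {f : NonMatchingEdge G M → Fin 3}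
    (hf : IsPMColoring G M f) : IsProperEdgeColoring G (extendColoring f) := by
  have matching_ne {m e : G.edgeSet} (hm : m.1 ∈ M) (he : e.1 ∉ M) {v : V} (hvm : v ∈ m.1)
      (hve : v ∈ e.1) : extendColoring f m ≠ extendColoring f e := by
    have hcolor : f ⟨e.1, e.2, he⟩ ∈ colorsAt f v := ⟨_, hve, rfl⟩
    rw [hf.colorsAt_eq_compl_extendColoring hcubic hM hm hvm] at hcolor
    rw [extendColoring_of_not_mem he]
    exact Ne.symm hcolor
  rintro e₁ e₂ hne ⟨v, hv₁, hv₂⟩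
  by_cases h₁ : e₁.1 ∈ M <;> by_cases h₂ : e₂.1 ∈ M
  · exact absurd (Subtype.ext (hM.eq_of_mem h₁ hv₁ h₂ hv₂)) hne
  · exact matching_ne h₁ h₂ hv₁ hv₂
  · exact (matching_ne h₂ h₁ hv₂ hv₁).symm
  · rw [extendColoring_of_not_mem h₁, extendColoring_of_not_mem h₂]
    exact hf.ne_of_mem hM hv₁ hv₂ fun h => hne (Subtype.ext (NonMatchingEdge.ext_iff.mp h))

namespace IsProperEdgeColoring

variable {g : G.edgeSet → Fin 3}

theorem colorsAt_restrictColoring (hg : IsProperEdgeColoring G g) {m : G.edgeSet} (hm : m.1 ∈ M)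
    {u : V} (hu : u ∈ m.1) : colorsAt (restrictColoring M g) u = {g m}ᶜ := by
  obtain ⟨e₁, e₂, hne, hedges⟩ := hM.exists_nonMatchingEdge_pair hcubic u
  have hu₁ : u ∈ e₁.1 := (hedges e₁).mpr (.inl rfl)
  have hu₂ : u ∈ e₂.1 := (hedges e₂).mpr (.inr rfl)
  rw [colorsAt_eq_pair hedges]
  exact Fin.pair_eq_compl_singleton
    (hg _ _ (NonMatchingEdge.toEdge_injective.ne hne) ⟨u, hu₁, hu₂⟩)
    (hg _ _ (NonMatchingEdge.toEdge_ne_of_mem hm).symm ⟨u, hu, hu₁⟩)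
    (hg _ _ (NonMatchingEdge.toEdge_ne_of_mem hm).symm ⟨u, hu, hu₂⟩)

theorem isPMColoring_restrictColoring (hg : IsProperEdgeColoring G g) :
    IsPMColoring G M (restrictColoring M g) := by
  intro u v huv
  let m : G.edgeSet := ⟨s(u, v), hM.1 huv⟩
  refine ⟨fun e₁ e₂ hu₁ hu₂ hne =>
    hg _ _ (NonMatchingEdge.toEdge_injective.ne hne) ⟨u, hu₁, hu₂⟩, ?_⟩
  exact (hg.colorsAt_restrictColoring hcubic hM (m := m) huv (Sym2.mem_mk_left u v)).trans
    (hg.colorsAt_restrictColoring hcubic hM (m := m) huv (Sym2.mem_mk_right u v)).symm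

theorem extendColoring_restrictColoring (hg : IsProperEdgeColoring G g) :
    extendColoring (restrictColoring M g) = g := by
  funext e
  by_cases he : e.1 ∈ M
  · have hcolors := (hg.isPMColoring_restrictColoring hcubic hM).colorsAt_eq_compl_extendColoring
      hcubic hM he e.1.out_fst_mem
    rw [hg.colorsAt_restrictColoring hcubic hM he e.1.out_fst_mem, compl_inj_iff,
      Set.singleton_eq_singleton_iff] at hcolors
    exact hcolors.symm
  · exact extendColoring_of_not_mem he

end IsProperEdgeColoring

noncomputable def pmColoringEquivProperEdgeColoring :
    {f : NonMatchingEdge G M → Fin 3 // IsPMColoring G M f} ≃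
      {g : G.edgeSet → Fin 3 // IsProperEdgeColoring G g} where
  toFun f := ⟨extendColoring f.1, f.2.isProperEdgeColoring_extendColoring hcubic hM⟩
  invFun g := ⟨restrictColoring M g.1, g.2.isPMColoring_restrictColoring hcubic hM⟩
  left_inv f := Subtype.ext (restrictColoring_extendColoring f.1)
  right_inv g := Subtype.ext (g.2.extendColoring_restrictColoring hcubic hM)

end Cubic

end

/-- For every cubic graph `G` with perfect matching `M`, the number of perfect matching
`3`-colorings of `(G, M)` equals the number of proper `3`-edge colorings of `G`. -/
theorem card_pmColorings_eq_card_edgeColorings {V : Type*} [Fintype V]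
    (G : SimpleGraph V) [DecidableRel G.Adj] (hcubic : ∀ v : V, G.degree v = 3)
    (M : Set (Sym2 V)) (hM : IsPerfectMatchingSet G M) :
    Nat.card {f : NonMatchingEdge G M → Fin 3 // IsPMColoring G M f} =
      Nat.card {g : G.edgeSet → Fin 3 //
        ∀ e₁ e₂ : G.edgeSet, e₁ ≠ e₂ → (∃ v : V, v ∈ e₁.1 ∧ v ∈ e₂.1) →
          g e₁ ≠ g e₂} :=
  Nat.card_congr (pmColoringEquivProperEdgeColoring hcubic hM)
end
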